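/- If A is an n×n real matrix all of whose eigenvalues have negative real part, then the integral P = ∫₀^∞ e^{At} B Bᵀ e^{Aᵀt} dt converges and satisfies the Lyapunov equation A P + P Aᵀ + B Bᵀ = 0. -/

import Mathlib

open Matrix MeasureTheory

/-- `A` is Hurwitz: all complex eigenvalues have negative real part. -/
def IsHurwitz {n : ℕ} (A : Matrix (Fin n) (Fin n) ℝ) : Prop :=
  ∀ μ ∈ spectrum ℂ (A.map (algebraMap ℝ ℂ)), μ.re < 0

/-! Let `F t = exp (t A) Q exp (t Aᵀ)`. Then `F' = A F + F Aᵀ`, so if `F` decays exponentially,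
integrating over `(0, ∞)` gives `A P + P Aᵀ = F ∞ - F 0 = -Q` for `P = ∫ F`.

Exponential decay of `exp (t A)` comes from Gelfand's formula. Every eigenvalue of `exp A` is
`exp μ` for an eigenvalue `μ` of `A`: since `A` commutes with `exp A`, it preserves the eigenspace
and has an eigenvector in it. So the spectral radius of `exp A` is below `exp (-ε)`, which gives
`‖exp (k A)‖ ≤ exp (-ε k)` for all large integers `k`. Compactness of `[0, 1]` handles the
fractional part of `t`. -/

open NormedSpace Filter Topology Asymptotics Set Module.End
open scoped NNReal

section ComplexBanachAlgebra
variable {A : Type*} [NormedRing A] [NormedAlgebra ℂ A] [CompleteSpace A]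

theorem eventually_norm_pow_le_of_spectralRadius_lt {a : A} {r : ℝ≥0}
    (h : spectralRadius ℂ a < r) : ∀ᶠ k : ℕ in atTop, ‖a ^ k‖ ≤ r ^ k := by
  have hgelfand := spectrum.pow_nnnorm_pow_one_div_tendsto_nhds_spectralRadius a
  filter_upwards [hgelfand.eventually_lt_const h, eventually_ge_atTop 1] with k hk hk1
  rw [← ENNReal.coe_rpow_of_nonneg _ (by positivity), ENNReal.coe_lt_coe, one_div,
    NNReal.rpow_inv_lt_iff (by positivity), NNReal.rpow_natCast] at hk
  exact_mod_cast hk.le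

variable [NormedAlgebra ℚ A]

theorem exp_ofReal_smul_eq_exp_pow_floor_mul (a : A) (t : ℝ) :
    exp ((t : ℂ) • a) = exp a ^ ⌊t⌋₊ * exp (((t - ⌊t⌋₊ : ℝ) : ℂ) • a) := by
  have hsplit : (t : ℂ) • a = ⌊t⌋₊ • a + (((t - ⌊t⌋₊ : ℝ) : ℂ) • a) := by
    rw [← Nat.cast_smul_eq_nsmul ℂ, ← add_smul]; push_cast; ring_nf
  rw [hsplit, NormedSpace.exp_add_of_commute (((Commute.refl a).smul_left _).smul_right _),
    NormedSpace.exp_nsmul]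

theorem isBigO_exp_ofReal_smul_of_spectralRadius_exp_lt {a : A} {ε : ℝ}
    (h : spectralRadius ℂ (exp a) < ENNReal.ofReal (Real.exp (-ε))) :
    (fun t : ℝ => exp ((t : ℂ) • a)) =O[atTop] fun t => Real.exp (-ε * t) := by
  obtain ⟨D, hD⟩ : ∃ D, ∀ s ∈ Icc (0 : ℝ) 1, ‖exp ((s : ℂ) • a)‖ ≤ D :=
    isCompact_Icc.exists_bound_of_continuousOn
      (exp_continuous.comp (Complex.continuous_ofReal.smul continuous_const)).continuousOn
  have hpow := (tendsto_nat_floor_atTop (α := ℝ)).eventually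
    (eventually_norm_pow_le_of_spectralRadius_lt h)
  refine IsBigO.of_bound (D * Real.exp |ε|) ?_
  filter_upwards [hpow, eventually_ge_atTop 0] with t hk ht
  have hfrac : t - ⌊t⌋₊ ∈ Icc (0 : ℝ) 1 :=
    ⟨sub_nonneg.2 (Nat.floor_le ht), by linarith [Nat.lt_floor_add_one t]⟩
  have hr : ((Real.exp (-ε)).toNNReal : ℝ) ^ ⌊t⌋₊ ≤ Real.exp |ε| * Real.exp (-ε * t) := by
    rw [Real.coe_toNNReal _ (Real.exp_pos _).le, ← Real.exp_nat_mul, ← Real.exp_add]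
    gcongr
    nlinarith [neg_abs_le ε, le_abs_self ε, hfrac.1, hfrac.2]
  rw [exp_ofReal_smul_eq_exp_pow_floor_mul, Real.norm_of_nonneg (Real.exp_pos _).le]
  calc _ ≤ ‖exp a ^ ⌊t⌋₊‖ * ‖exp (((t - ⌊t⌋₊ : ℝ) : ℂ) • a)‖ := norm_mul_le _ _
    _ ≤ (Real.exp |ε| * Real.exp (-ε * t)) * D := by
        gcongr
        · exact hk.trans hr
        · exact hD _ hfrac
    _ = _ := by ring

end ComplexBanachAlgebra

theorem integrableOn_Ioi_of_isBigO_exp_neg {E : Type*} [NormedAddCommGroup E] {f : ℝ → E}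
    {a b : ℝ} (hb : 0 < b) (hf : ContinuousOn f (Ici a))
    (ho : f =O[atTop] fun x => Real.exp (-b * x)) : IntegrableOn f (Ioi a) :=
  (integrable_norm_iff ((hf.mono Ioi_subset_Ici_self).aestronglyMeasurable measurableSet_Ioi)).mp
    (integrable_of_isBigO_exp_neg hb hf.norm ho.norm_left)

section RealBanachAlgebra
variable {𝔸 : Type*} [NormedRing 𝔸] [NormedAlgebra ℝ 𝔸]

theorem isBigO_exp_smul_mul_mul_exp_smul {a b : 𝔸} {ε : ℝ}
    (ha : (fun t : ℝ => exp (t • a)) =O[atTop] fun t => Real.exp (-ε * t))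
    (hb : (fun t : ℝ => exp (t • b)) =O[atTop] fun t => Real.exp (-ε * t)) (q : 𝔸) :
    (fun t : ℝ => exp (t • a) * q * exp (t • b)) =O[atTop] fun t => Real.exp (-(2 * ε) * t) := by
  refine ((ha.mul (isBigO_const_const q one_ne_zero atTop)).mul hb).congr_right fun t => ?_
  rw [mul_one, ← Real.exp_add]
  ring_nf

variable [CompleteSpace 𝔸]

theorem hasDerivAt_exp_smul_mul_mul_exp_smul (a q b : 𝔸) (t : ℝ) :
    HasDerivAt (fun s : ℝ => exp (s • a) * q * exp (s • b))
      (a * (exp (t • a) * q * exp (t • b)) + exp (t • a) * q * exp (t • b) * b) t := by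
  refine (((hasDerivAt_exp_smul_const' a t).mul_const q).mul
    (hasDerivAt_exp_smul_const b t)).congr_deriv ?_
  simp only [mul_assoc]

variable {a b : 𝔸} {ε : ℝ}

theorem integrableOn_exp_smul_mul_mul_exp_smul (hε : 0 < ε)
    (ha : (fun t : ℝ => exp (t • a)) =O[atTop] fun t => Real.exp (-ε * t))
    (hb : (fun t : ℝ => exp (t • b)) =O[atTop] fun t => Real.exp (-ε * t)) (q : 𝔸) :
    IntegrableOn (fun t : ℝ => exp (t • a) * q * exp (t • b)) (Ioi 0) :=
  integrableOn_Ioi_of_isBigO_exp_neg (by positivity)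
    (fun t _ => (hasDerivAt_exp_smul_mul_mul_exp_smul a q b t).continuousAt.continuousWithinAt)
    (isBigO_exp_smul_mul_mul_exp_smul ha hb q)

theorem integral_exp_smul_mul_mul_exp_smul_sylvester (hε : 0 < ε)
    (ha : (fun t : ℝ => exp (t • a)) =O[atTop] fun t => Real.exp (-ε * t))
    (hb : (fun t : ℝ => exp (t • b)) =O[atTop] fun t => Real.exp (-ε * t)) (q : 𝔸) :
    a * (∫ t in Ioi (0 : ℝ), exp (t • a) * q * exp (t • b))
      + (∫ t in Ioi (0 : ℝ), exp (t • a) * q * exp (t • b)) * b + q = 0 := by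
  have hint := integrableOn_exp_smul_mul_mul_exp_smul hε ha hb q
  have hlim : Tendsto (fun t : ℝ => exp (t • a) * q * exp (t • b)) atTop (𝓝 0) :=
    (isBigO_exp_smul_mul_mul_exp_smul ha hb q).trans_tendsto <| Real.tendsto_exp_atBot.comp <|
      tendsto_id.const_mul_atTop_of_neg (by linarith)
  have hftc := integral_Ioi_of_hasDerivAt_of_tendsto'
    (fun t _ => hasDerivAt_exp_smul_mul_mul_exp_smul a q b t)
    ((hint.const_mul a).add (hint.mul_const b)) hlim
  rw [integral_add (hint.const_mul a) (hint.mul_const b), integral_const_mul_of_integrable hint,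
    integral_mul_const_of_integrable hint] at hftc
  simp [hftc]

end RealBanachAlgebra

section FrobeniusNorm

/- The Frobenius norm is submultiplicative and invariant under transposition and under the
entrywise embedding `ℝ → ℂ`, so decay of `exp (t A)` transfers from the complexification of `A` to
`A` and from `A` to `Aᵀ`. -/
attribute [local instance] Matrix.frobeniusNormedAddCommGroup Matrix.frobeniusNormedRing
  Matrix.frobeniusNormedAlgebra

namespace Matrix
variable {ι : Type*} [Fintype ι] [DecidableEq ι]

theorem exp_mulVec_of_mulVec_eq_smul {M : Matrix ι ι ℂ} {μ : ℂ} {v : ι → ℂ}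
    (hv : M *ᵥ v = μ • v) : exp M *ᵥ v = Complex.exp μ • v := by
  have hpow (k : ℕ) : M ^ k *ᵥ v = μ ^ k • v := by
    induction k with
    | zero => simp
    | succ k ih => rw [pow_succ, ← mulVec_mulVec, hv, mulVec_smul, ih, smul_smul, pow_succ']
  have hM := (exp_series_hasSum_exp' (𝕂 := ℂ) M).map (mulVec.addMonoidHomLeft v)
    (continuous_id.matrix_mulVec continuous_const)
  have hμ := (exp_series_hasSum_exp' (𝕂 := ℂ) μ).smul_const v
  refine hM.unique ?_
  rw [Complex.exp_eq_exp_ℂ]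
  convert hμ using 2 with k
  simp [mulVec.addMonoidHomLeft, smul_mulVec, hpow, smul_smul]

theorem spectrum_exp_subset (M : Matrix ι ι ℂ) :
    spectrum ℂ (exp M) ⊆ Complex.exp '' spectrum ℂ M := by
  intro ν hν
  set f := toLin' M
  set g := toLin' (exp M)
  have hcomm : Commute g f := ((Commute.refl M).exp_left).map toLinAlgEquiv'
  rw [← spectrum_toLin', ← hasEigenvalue_iff_mem_spectrum] at hν
  have hmaps := mapsTo_genEigenspace_of_comm hcomm ν 1
  have : Nontrivial (eigenspace g ν) := Submodule.nontrivial_iff_ne_bot.mpr hν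
  obtain ⟨μ, hμ⟩ := exists_eigenvalue (f.restrict hmaps)
  obtain ⟨w, hw⟩ := hμ.exists_hasEigenvector
  have hfw : M *ᵥ (w : ι → ℂ) = μ • (w : ι → ℂ) := congrArg Subtype.val hw.apply_eq_smul
  have hgw : exp M *ᵥ (w : ι → ℂ) = ν • (w : ι → ℂ) := mem_eigenspace_iff.mp w.2
  have hw0 : (w : ι → ℂ) ≠ 0 := by simpa using hw.2
  refine ⟨μ, ?_, smul_left_injective ℂ hw0 ?_⟩
  · rw [← spectrum_toLin', ← hasEigenvalue_iff_mem_spectrum]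
    exact hasEigenvalue_of_hasEigenvector ⟨mem_eigenspace_iff.mpr hfw, hw0⟩
  · simp only [← exp_mulVec_of_mulVec_eq_smul hfw, hgw]

theorem exists_spectralRadius_exp_lt (M : Matrix ι ι ℂ) (hM : ∀ z ∈ spectrum ℂ M, z.re < 0) :
    ∃ ε > 0, spectralRadius ℂ (exp M) < ENNReal.ofReal (Real.exp (-ε)) := by
  obtain ⟨δ, hδ, hle⟩ := (spectrum.isCompact M).exists_forall_le' (f := fun z : ℂ => -z.re)
    Complex.continuous_re.neg.continuousOn (a := 0) fun z hz => neg_pos.2 (hM z hz)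
  refine ⟨δ / 2, half_pos hδ, ?_⟩
  rcases (spectrum ℂ (exp M)).eq_empty_or_nonempty with h | h
  · simp [spectralRadius, h, Real.exp_pos]
  refine spectrum.spectralRadius_lt_of_forall_lt_of_nonempty h fun ν hν => ?_
  obtain ⟨z, hz, rfl⟩ := spectrum_exp_subset M hν
  rw [← NNReal.coe_lt_coe, coe_nnnorm, Complex.norm_exp, Real.coe_toNNReal _ (Real.exp_pos _).le]
  gcongr
  linarith [hle z hz]

theorem exists_isBigO_exp_ofReal_smul (M : Matrix ι ι ℂ) (hM : ∀ z ∈ spectrum ℂ M, z.re < 0) :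
    ∃ ε > 0, (fun t : ℝ => exp ((t : ℂ) • M)) =O[atTop] fun t => Real.exp (-ε * t) :=
  (exists_spectralRadius_exp_lt M hM).imp fun _ ⟨hε, h⟩ =>
    ⟨hε, isBigO_exp_ofReal_smul_of_spectralRadius_exp_lt h⟩

theorem exp_map_algebraMap (X : Matrix ι ι ℝ) :
    (exp X).map (algebraMap ℝ ℂ) = exp (X.map (algebraMap ℝ ℂ)) :=
  map_exp (algebraMap ℝ ℂ).mapMatrix (continuous_id.matrix_map Complex.continuous_ofReal) X

theorem isBigO_exp_smul_transpose {A : Matrix ι ι ℝ} {l : Filter ℝ} {g : ℝ → ℝ}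
    (h : (fun t : ℝ => exp (t • A)) =O[l] g) : (fun t : ℝ => exp (t • Aᵀ)) =O[l] g :=
  IsBigO.of_norm_left <| by
    simpa only [← transpose_smul, exp_transpose, frobenius_norm_transpose] using h.norm_left

theorem sylvester_integral_entrywise {A C : Matrix ι ι ℝ} {ε : ℝ} (hε : 0 < ε)
    (hA : (fun t : ℝ => exp (t • A)) =O[atTop] fun t => Real.exp (-ε * t))
    (hC : (fun t : ℝ => exp (t • C)) =O[atTop] fun t => Real.exp (-ε * t)) (Q : Matrix ι ι ℝ) :
    (∀ i j, IntegrableOn (fun t : ℝ => (exp (t • A) * Q * exp (t • C)) i j) (Ioi 0)) ∧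
    A * (of fun i j => ∫ t in Ioi (0 : ℝ), (exp (t • A) * Q * exp (t • C)) i j)
      + (of fun i j => ∫ t in Ioi (0 : ℝ), (exp (t • A) * Q * exp (t • C)) i j) * C + Q = 0 := by
  have hint := integrableOn_exp_smul_mul_mul_exp_smul hε hA hC Q
  have hP : (of fun i j => ∫ t in Ioi (0 : ℝ), (exp (t • A) * Q * exp (t • C)) i j)
      = ∫ t in Ioi (0 : ℝ), exp (t • A) * Q * exp (t • C) := by
    ext i j
    exact (entryLinearMap ℝ ℝ i j).toContinuousLinearMap.integral_comp_comm hint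
  refine ⟨fun i j => (entryLinearMap ℝ ℝ i j).toContinuousLinearMap.integrable_comp hint, ?_⟩
  rw [hP]
  exact integral_exp_smul_mul_mul_exp_smul_sylvester hε hA hC Q

end Matrix

theorem IsHurwitz.exists_isBigO_exp_smul {n : ℕ} {A : Matrix (Fin n) (Fin n) ℝ}
    (hA : IsHurwitz A) :
    ∃ ε > 0, (fun t : ℝ => exp (t • A)) =O[atTop] fun t => Real.exp (-ε * t) := by
  obtain ⟨ε, hε, h⟩ := (A.map (algebraMap ℝ ℂ)).exists_isBigO_exp_ofReal_smul hA
  refine ⟨ε, hε, IsBigO.of_norm_left ?_⟩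
  convert h.norm_left using 2 with t
  rw [← frobenius_norm_map_eq _ (algebraMap ℝ ℂ) (by simp), exp_map_algebraMap]
  congr 2
  ext
  simp

end FrobeniusNorm

/-- For Hurwitz `A`, the controllability Gramian integral
`P = ∫₀^∞ e^{At} B Bᵀ e^{Aᵀt} dt` converges (entrywise) and satisfies the
Lyapunov equation `A P + P Aᵀ + B Bᵀ = 0`. -/
theorem gramian_exists_and_lyapunov {n m : ℕ}
    (A : Matrix (Fin n) (Fin n) ℝ) (B : Matrix (Fin n) (Fin m) ℝ)
    (hA : IsHurwitz A) :
    (∀ i j, IntegrableOn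
      (fun t : ℝ => (NormedSpace.exp (t • A) * B * Bᵀ * NormedSpace.exp (t • Aᵀ)) i j)
      (Set.Ioi 0)) ∧
    (A * (Matrix.of fun i j => ∫ t in Set.Ioi (0 : ℝ),
        (NormedSpace.exp (t • A) * B * Bᵀ * NormedSpace.exp (t • Aᵀ)) i j)
      + (Matrix.of fun i j => ∫ t in Set.Ioi (0 : ℝ),
        (NormedSpace.exp (t • A) * B * Bᵀ * NormedSpace.exp (t • Aᵀ)) i j) * Aᵀ
      + B * Bᵀ = 0) := by
  obtain ⟨ε, hε, hexp⟩ := hA.exists_isBigO_exp_smul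
  simpa only [Matrix.mul_assoc] using
    Matrix.sylvester_integral_entrywise hε hexp (Matrix.isBigO_exp_smul_transpose hexp) (B * Bᵀ)
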